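/- For every σ > 0, the infimum over y > 0 of μ(y)/η(y) equals σ · h(−σ) and is strictly positive, where η(y) = exp(σ²/2 − y) Φ(y/σ − σ), μ(y) = (y − σ²) η(y) + (σ/√(2π)) exp(−y²/(2σ²)), h(x) = x + Φ′(x)/Φ(x), and Φ and Φ′ are the standard normal CDF and PDF. (This uses that h is strictly increasing and everywhere positive.) -/

import Mathlib

/-!
Write `N x = x Φ(x) + φ(x) = ∫_{t ≤ x} (x - t) φ(t) dt`, so that `h = N / Φ` and `N' = Φ`. Then
`h' = F / Φ²` with `F = Φ² - N φ`, and `F' = φ (1 + x²) g` with `g = Φ + x φ / (1 + x²)`,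
`g' = 2 φ / (1 + x²)²`. Each of `Φ, N, g, F` has positive derivative and vanishes at `-∞`, hence
is positive; so `h` is positive and strictly increasing. Since `μ(y) / η(y) = σ h(y / σ - σ)`, the
infimum over `y > 0` is the value at the endpoint `y = 0`.
-/

open MeasureTheory Set

/-- The standard normal cumulative distribution function. -/
noncomputable def stdNormalCDF (x : ℝ) : ℝ :=
  ∫ t in Iic x, (Real.sqrt (2 * Real.pi))⁻¹ * Real.exp (-t ^ 2 / 2)

/-- The standard normal probability density function. -/
noncomputable def stdNormalPDF (x : ℝ) : ℝ :=
  (Real.sqrt (2 * Real.pi))⁻¹ * Real.exp (-x ^ 2 / 2)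

open Filter Topology Real

theorem Monotone.iInf_gt_eq_of_continuousWithinAt {α β : Type*} [LinearOrder α]
    [TopologicalSpace α] [OrderTopology α] [ConditionallyCompleteLinearOrder β]
    [TopologicalSpace β] [OrderTopology β] {f : α → β} {a : α} [(𝓝[>] a).NeBot]
    (hf : Monotone f) (hfa : ContinuousWithinAt f (Ioi a) a) :
    ⨅ t : {t // a < t}, f t = f a := by
  change ⨅ t : Ioi a, f t = f a
  rw [← sInf_image']
  exact tendsto_nhds_unique (hf.tendsto_nhdsGT a) hfa

theorem pos_of_hasDerivAt_pos_of_tendsto_atBot {f f' : ℝ → ℝ} (hf : ∀ x, HasDerivAt f (f' x) x)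
    (hf' : ∀ x, 0 < f' x) (hf0 : Tendsto f atBot (𝓝 0)) (x : ℝ) : 0 < f x := by
  have hmono := strictMono_of_hasDerivAt_pos hf hf'
  obtain ⟨y, hy⟩ := exists_lt x
  exact (hmono.monotone.le_of_tendsto hf0 y).trans_lt (hmono hy)

section StdNormal

theorem stdNormalPDF_pos (x : ℝ) : 0 < stdNormalPDF x := by
  unfold stdNormalPDF
  positivity

theorem continuous_stdNormalPDF : Continuous stdNormalPDF := by
  unfold stdNormalPDF
  fun_prop

theorem integrable_stdNormalPDF : Integrable stdNormalPDF := by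
  convert (integrable_exp_neg_mul_sq (b := 2⁻¹) (by norm_num)).const_mul (√(2 * π))⁻¹ using 2
  unfold stdNormalPDF
  ring_nf

theorem integrable_mul_stdNormalPDF : Integrable fun t => t * stdNormalPDF t := by
  convert (integrable_mul_exp_neg_mul_sq (b := 2⁻¹) (by norm_num)).const_mul (√(2 * π))⁻¹ using 2
  unfold stdNormalPDF
  ring_nf

theorem hasDerivAt_stdNormalPDF (x : ℝ) : HasDerivAt stdNormalPDF (-x * stdNormalPDF x) x := by
  have hexponent : HasDerivAt (fun t : ℝ => -t ^ 2 / 2) (-x) x :=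
    (((hasDerivAt_pow 2 x).neg).div_const 2).congr_deriv (by ring)
  refine (hexponent.exp.const_mul (√(2 * π))⁻¹).congr_deriv ?_
  unfold stdNormalPDF
  ring

theorem tendsto_stdNormalPDF_atBot : Tendsto stdNormalPDF atBot (𝓝 0) := by
  have hsq : Tendsto (fun x : ℝ => x ^ 2) atBot atTop := by
    simpa [Function.comp_def] using
      (tendsto_pow_atTop (α := ℝ) two_ne_zero).comp tendsto_neg_atBot_atTop
  have hexp : Tendsto (fun x : ℝ => exp (-x ^ 2 / 2)) atBot (𝓝 0) :=
    tendsto_exp_atBot.comp ((tendsto_neg_atTop_atBot.comp hsq).atBot_div_const two_pos)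
  show Tendsto (fun x => (√(2 * π))⁻¹ * exp (-x ^ 2 / 2)) atBot (𝓝 0)
  simpa only [mul_zero] using hexp.const_mul (√(2 * π))⁻¹

theorem integral_Iic_mul_stdNormalPDF (x : ℝ) :
    ∫ t in Iic x, t * stdNormalPDF t = -stdNormalPDF x := by
  have hFTC := integral_Iic_of_hasDerivAt_of_tendsto' (a := x) (m := 0)
    (f := fun t => -stdNormalPDF t) (f' := fun t => t * stdNormalPDF t)
    (fun t _ => (hasDerivAt_stdNormalPDF t).neg.congr_deriv (by ring))
    integrable_mul_stdNormalPDF.integrableOn (by simpa using tendsto_stdNormalPDF_atBot.neg)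
  rwa [sub_zero] at hFTC

theorem stdNormalCDF_eq_integral (x : ℝ) : stdNormalCDF x = ∫ t in Iic x, stdNormalPDF t := rfl

theorem stdNormalCDF_sub_stdNormalCDF (a b : ℝ) :
    stdNormalCDF b - stdNormalCDF a = ∫ t in a..b, stdNormalPDF t :=
  intervalIntegral.integral_Iic_sub_Iic integrable_stdNormalPDF.integrableOn
    integrable_stdNormalPDF.integrableOn

theorem hasDerivAt_stdNormalCDF (x : ℝ) : HasDerivAt stdNormalCDF (stdNormalPDF x) x := by
  have h : stdNormalCDF = fun y => stdNormalCDF 0 + ∫ t in (0 : ℝ)..y, stdNormalPDF t := by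
    funext y
    rw [← stdNormalCDF_sub_stdNormalCDF]
    ring
  rw [h]
  exact (intervalIntegral.integral_hasDerivAt_right integrable_stdNormalPDF.intervalIntegrable
    (continuous_stdNormalPDF.stronglyMeasurableAtFilter _ _)
    continuous_stdNormalPDF.continuousAt).const_add _

theorem tendsto_stdNormalCDF_atBot : Tendsto stdNormalCDF atBot (𝓝 0) := by
  have h := intervalIntegral_tendsto_integral_Iic 0 integrable_stdNormalPDF.integrableOn tendsto_id
  have hlim := (tendsto_const_nhds (x := stdNormalCDF 0)).sub h
  rw [← stdNormalCDF_eq_integral, sub_self] at hlim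
  refine hlim.congr fun x => ?_
  rw [id, ← stdNormalCDF_sub_stdNormalCDF]
  ring

theorem stdNormalCDF_pos (x : ℝ) : 0 < stdNormalCDF x :=
  pos_of_hasDerivAt_pos_of_tendsto_atBot hasDerivAt_stdNormalCDF stdNormalPDF_pos
    tendsto_stdNormalCDF_atBot x

end StdNormal

section ShiftedInvMills

noncomputable def normalShortfall (x : ℝ) : ℝ := x * stdNormalCDF x + stdNormalPDF x

theorem normalShortfall_eq_integral (x : ℝ) :
    normalShortfall x = ∫ t in Iic x, (x - t) * stdNormalPDF t := by
  simp_rw [sub_mul]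
  rw [integral_sub (integrable_stdNormalPDF.const_mul x).integrableOn
    integrable_mul_stdNormalPDF.integrableOn, integral_const_mul, integral_Iic_mul_stdNormalPDF,
    normalShortfall, stdNormalCDF_eq_integral, sub_neg_eq_add]

theorem normalShortfall_nonneg (x : ℝ) : 0 ≤ normalShortfall x := by
  rw [normalShortfall_eq_integral]
  exact setIntegral_nonneg measurableSet_Iic fun t (ht : t ≤ x) =>
    mul_nonneg (sub_nonneg.2 ht) (stdNormalPDF_pos t).le

theorem hasDerivAt_normalShortfall (x : ℝ) :
    HasDerivAt normalShortfall (stdNormalCDF x) x := by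
  refine (((hasDerivAt_id' x).mul (hasDerivAt_stdNormalCDF x)).add
    (hasDerivAt_stdNormalPDF x)).congr_deriv ?_
  ring

theorem tendsto_normalShortfall_atBot : Tendsto normalShortfall atBot (𝓝 0) := by
  refine squeeze_zero_norm' ?_ tendsto_stdNormalPDF_atBot
  filter_upwards [eventually_le_atBot 0] with x hx
  rw [Real.norm_of_nonneg (normalShortfall_nonneg x), normalShortfall]
  nlinarith [stdNormalCDF_pos x]

theorem normalShortfall_pos (x : ℝ) : 0 < normalShortfall x :=
  pos_of_hasDerivAt_pos_of_tendsto_atBot hasDerivAt_normalShortfall stdNormalCDF_pos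
    tendsto_normalShortfall_atBot x

-- Its positivity is Gordon's lower bound `Φ(x) ≥ -x φ(x) / (1 + x²)`.
noncomputable def gordonGap (x : ℝ) : ℝ := stdNormalCDF x + x / (1 + x ^ 2) * stdNormalPDF x

theorem hasDerivAt_gordonGap (x : ℝ) :
    HasDerivAt gordonGap (2 * stdNormalPDF x / (1 + x ^ 2) ^ 2) x := by
  have hden : HasDerivAt (fun t : ℝ => 1 + t ^ 2) (2 * x) x := by
    simpa using (hasDerivAt_pow 2 x).const_add 1
  have hq : HasDerivAt (fun t : ℝ => t / (1 + t ^ 2))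
      ((1 * (1 + x ^ 2) - x * (2 * x)) / (1 + x ^ 2) ^ 2) x :=
    (hasDerivAt_id x).div hden (by positivity)
  refine ((hasDerivAt_stdNormalCDF x).add (hq.mul (hasDerivAt_stdNormalPDF x))).congr_deriv ?_
  field_simp
  ring

theorem tendsto_gordonGap_atBot : Tendsto gordonGap atBot (𝓝 0) := by
  have hbound (x : ℝ) : ‖x / (1 + x ^ 2) * stdNormalPDF x‖ ≤ stdNormalPDF x := by
    rw [norm_mul, Real.norm_of_nonneg (stdNormalPDF_pos x).le, norm_div,
      Real.norm_of_nonneg (by positivity : (0 : ℝ) ≤ 1 + x ^ 2)]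
    refine mul_le_of_le_one_left (stdNormalPDF_pos x).le ((div_le_one (by positivity)).2 ?_)
    nlinarith [sq_nonneg (‖x‖ - 1), Real.norm_eq_abs x, sq_abs x]
  show Tendsto (fun x => stdNormalCDF x + x / (1 + x ^ 2) * stdNormalPDF x) atBot (𝓝 0)
  simpa only [add_zero] using
    tendsto_stdNormalCDF_atBot.add (squeeze_zero_norm hbound tendsto_stdNormalPDF_atBot)

theorem gordonGap_pos (x : ℝ) : 0 < gordonGap x :=
  pos_of_hasDerivAt_pos_of_tendsto_atBot hasDerivAt_gordonGap
    (fun x => by have := stdNormalPDF_pos x; positivity) tendsto_gordonGap_atBot x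

noncomputable def shiftedInvMillsDerivNum (x : ℝ) : ℝ :=
  stdNormalCDF x ^ 2 - normalShortfall x * stdNormalPDF x

theorem hasDerivAt_shiftedInvMillsDerivNum (x : ℝ) :
    HasDerivAt shiftedInvMillsDerivNum (stdNormalPDF x * (1 + x ^ 2) * gordonGap x) x := by
  refine (((hasDerivAt_stdNormalCDF x).pow 2).sub
    ((hasDerivAt_normalShortfall x).mul (hasDerivAt_stdNormalPDF x))).congr_deriv ?_
  rw [normalShortfall, gordonGap]
  field_simp
  ring

theorem tendsto_shiftedInvMillsDerivNum_atBot :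
    Tendsto shiftedInvMillsDerivNum atBot (𝓝 0) := by
  show Tendsto (fun x => stdNormalCDF x ^ 2 - normalShortfall x * stdNormalPDF x) atBot (𝓝 0)
  simpa using (tendsto_stdNormalCDF_atBot.pow 2).sub
      (tendsto_normalShortfall_atBot.mul tendsto_stdNormalPDF_atBot)

theorem shiftedInvMillsDerivNum_pos (x : ℝ) : 0 < shiftedInvMillsDerivNum x :=
  pos_of_hasDerivAt_pos_of_tendsto_atBot hasDerivAt_shiftedInvMillsDerivNum
    (fun x => mul_pos (by have := stdNormalPDF_pos x; positivity) (gordonGap_pos x))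
    tendsto_shiftedInvMillsDerivNum_atBot x

noncomputable def shiftedInvMills (x : ℝ) : ℝ := x + stdNormalPDF x / stdNormalCDF x

theorem shiftedInvMills_eq_div (x : ℝ) :
    shiftedInvMills x = normalShortfall x / stdNormalCDF x := by
  rw [shiftedInvMills, normalShortfall, add_div, mul_div_cancel_right₀ _ (stdNormalCDF_pos x).ne']

theorem shiftedInvMills_pos (x : ℝ) : 0 < shiftedInvMills x := by
  rw [shiftedInvMills_eq_div]
  exact div_pos (normalShortfall_pos x) (stdNormalCDF_pos x)

theorem hasDerivAt_shiftedInvMills (x : ℝ) :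
    HasDerivAt shiftedInvMills (shiftedInvMillsDerivNum x / stdNormalCDF x ^ 2) x := by
  rw [show shiftedInvMills = fun x => normalShortfall x / stdNormalCDF x from
    funext shiftedInvMills_eq_div]
  refine ((hasDerivAt_normalShortfall x).div (hasDerivAt_stdNormalCDF x)
    (stdNormalCDF_pos x).ne').congr_deriv ?_
  rw [shiftedInvMillsDerivNum]
  ring

theorem strictMono_shiftedInvMills : StrictMono shiftedInvMills :=
  strictMono_of_hasDerivAt_pos hasDerivAt_shiftedInvMills fun x =>
    div_pos (shiftedInvMillsDerivNum_pos x) (pow_pos (stdNormalCDF_pos x) 2)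

theorem continuous_shiftedInvMills : Continuous shiftedInvMills :=
  continuous_iff_continuousAt.2 fun x => (hasDerivAt_shiftedInvMills x).continuousAt

end ShiftedInvMills

-- Completing the square: `σ²/2 - t - (t/σ - σ)²/2 = -t²/(2σ²)`.
theorem div_sqrt_two_pi_mul_exp_eq {σ : ℝ} (hσ : σ ≠ 0) (t : ℝ) :
    σ / √(2 * π) * exp (-t ^ 2 / (2 * σ ^ 2)) =
      σ * (exp (σ ^ 2 / 2 - t) * stdNormalPDF (t / σ - σ)) := by
  have hsq : σ ^ 2 / 2 - t + -(t / σ - σ) ^ 2 / 2 = -t ^ 2 / (2 * σ ^ 2) := by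
    field_simp
    ring
  rw [stdNormalPDF, ← hsq, exp_add]
  ring

/-- For the Gaussian-noise sensing model, with
`η(y) = e^{σ²/2 − y} Φ(y/σ − σ)`,
`μ(y) = (y − σ²) η(y) + (σ/√(2π)) e^{−y²/(2σ²)}` and
`h(x) = x + Φ′(x)/Φ(x)`: for every `σ > 0`, the infimum of `μ(y)/η(y)` over
`y > 0` equals `σ h(−σ)`, which is strictly positive. -/
theorem stmt16 (σ : ℝ) (hσ : 0 < σ)
    (η μ h : ℝ → ℝ)
    (hη : ∀ t, η t = Real.exp (σ ^ 2 / 2 - t) * stdNormalCDF (t / σ - σ))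
    (hμ : ∀ t, μ t = (t - σ ^ 2) * η t
        + σ / Real.sqrt (2 * Real.pi) * Real.exp (-t ^ 2 / (2 * σ ^ 2)))
    (hh : ∀ x, h x = x + stdNormalPDF x / stdNormalCDF x) :
    (⨅ t : {t : ℝ // 0 < t}, μ t.1 / η t.1) = σ * h (-σ) ∧ 0 < σ * h (-σ) := by
  obtain rfl : h = shiftedInvMills := funext hh
  have ratio (t : ℝ) : μ t / η t = σ * shiftedInvMills (t / σ - σ) := by
    have hη0 : η t ≠ 0 := by
      rw [hη]
      exact mul_ne_zero (exp_pos _).ne' (stdNormalCDF_pos _).ne'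
    have hx : t - σ ^ 2 = σ * (t / σ - σ) := by
      field_simp
    rw [div_eq_iff hη0, hμ, div_sqrt_two_pi_mul_exp_eq hσ.ne', hη, shiftedInvMills, hx]
    have hΦ := (stdNormalCDF_pos (t / σ - σ)).ne'
    generalize t / σ - σ = x at hΦ ⊢
    field_simp
  simp only [ratio]
  refine ⟨?_, mul_pos hσ (shiftedInvMills_pos _)⟩
  have hmono : Monotone fun t => σ * shiftedInvMills (t / σ - σ) := fun s t hst =>
    mul_le_mul_of_nonneg_left (strictMono_shiftedInvMills.monotone (by gcongr)) hσ.le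
  have hcont : Continuous fun t => σ * shiftedInvMills (t / σ - σ) :=
    continuous_const.mul (continuous_shiftedInvMills.comp (by fun_prop))
  simpa using hmono.iInf_gt_eq_of_continuousWithinAt (a := 0) hcont.continuousWithinAt
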